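/- Let X be a random vector in ℝ^d with ‖X‖ ≤ r almost surely for some r > 0. Then Ψ*(v) = +∞ for every v ∈ ℝ^d with ‖v‖ > r·√(2/π). -/

import Mathlib

open MeasureTheory ProbabilityTheory Real
open scoped RealInnerProductSpace
open Filter Set
open scoped NNReal ENNReal

noncomputable section

abbrev Euc (d : ℕ) : Type := EuclideanSpace ℝ (Fin d)

lemma aux_Ioi : ∫ x in Set.Ioi (0:ℝ), x * Real.exp (-(1/2) * x ^ 2) = 1 := by
  have A : ∀ x : ℝ, HasDerivAt (fun y : ℝ => -Real.exp (-(1/2) * y ^ 2))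
      (x * Real.exp (-(1/2) * x ^ 2)) x := by
    intro x
    have h := (((hasDerivAt_pow 2 x).const_mul (-(1/2):ℝ)).exp).neg
    convert h using 1
    · rfl
    · rfl
    · rfl
    rw [pow_one]
    ring
  have B : Filter.Tendsto (fun y : ℝ => -Real.exp (-(1/2) * y ^ 2)) Filter.atTop (nhds 0) := by
    rw [show (0:ℝ) = -0 by ring]
    refine Filter.Tendsto.neg (Real.tendsto_exp_atBot.comp ?_)
    exact (tendsto_pow_atTop two_ne_zero).const_mul_atTop_of_neg (by norm_num)
  have := integral_Ioi_of_hasDerivAt_of_tendsto'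
    (a := 0) (f := fun y : ℝ => -Real.exp (-(1/2) * y ^ 2)) (fun x _ => A x)
    (integrable_mul_exp_neg_mul_sq (by norm_num : (0:ℝ) < 1/2)).integrableOn B
  simpa using this

lemma sqrt_two_div_pi_eq : Real.sqrt (2/Real.pi) = 2 * (Real.sqrt (2*Real.pi))⁻¹ := by
  have h2π : (0:ℝ) < 2*Real.pi := by positivity
  have hs : Real.sqrt (2*Real.pi) ≠ 0 := (Real.sqrt_pos.2 h2π).ne'
  rw [eq_mul_inv_iff_mul_eq₀ hs, ← Real.sqrt_mul (by positivity) (2*Real.pi)]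
  rw [show (2/Real.pi) * (2*Real.pi) = 2^2 by field_simp, Real.sqrt_sq (by norm_num)]

lemma pdf_mul_abs_eq (z : ℝ) : gaussianPDFReal 0 1 z * |z|
    = (Real.sqrt (2*Real.pi))⁻¹ * abs (|z| * Real.exp (-(1/2) * |z| ^ 2)) := by
  rw [gaussianPDFReal]
  rw [abs_mul, abs_of_nonneg (abs_nonneg z), abs_of_pos (Real.exp_pos _), sq_abs]
  norm_num
  ring_nf

lemma gauss_abs_integrable : Integrable (fun z : ℝ => |z|) (gaussianReal 0 1) := by
  have hm : Measurable fun z : ℝ => (gaussianPDFReal 0 1 z).toNNReal :=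
    (measurable_gaussianPDFReal 0 1).real_toNNReal
  rw [gaussianReal_of_var_ne_zero _ one_ne_zero,
    show gaussianPDF 0 1 = fun z => (((gaussianPDFReal 0 1 z).toNNReal : ℝ≥0) : ℝ≥0∞) from rfl,
    integrable_withDensity_iff_integrable_smul hm]
  have h := ((integrable_mul_exp_neg_mul_sq (by norm_num : (0:ℝ) < 1/2)).abs).const_mul
    ((Real.sqrt (2*Real.pi))⁻¹)
  refine h.congr (Filter.Eventually.of_forall fun z => ?_)
  simp only [NNReal.smul_def, smul_eq_mul,
    Real.coe_toNNReal _ (gaussianPDFReal_nonneg 0 1 z), pdf_mul_abs_eq]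
  rw [sq_abs]
  simp [abs_mul, abs_of_pos (Real.exp_pos _)]

lemma gauss_abs_moment : ∫ z, |z| ∂(gaussianReal 0 1) = Real.sqrt (2/Real.pi) := by
  have hm : Measurable fun z : ℝ => (gaussianPDFReal 0 1 z).toNNReal :=
    (measurable_gaussianPDFReal 0 1).real_toNNReal
  rw [gaussianReal_of_var_ne_zero _ one_ne_zero,
    show gaussianPDF 0 1 = fun z => (((gaussianPDFReal 0 1 z).toNNReal : ℝ≥0) : ℝ≥0∞) from rfl,
    integral_withDensity_eq_integral_smul hm]
  have heq : ∀ z : ℝ, ((gaussianPDFReal 0 1 z).toNNReal : ℝ≥0) • |z|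
      = (Real.sqrt (2*Real.pi))⁻¹ * (|z| * Real.exp (-(1/2) * |z| ^ 2)) := by
    intro z
    rw [NNReal.smul_def, smul_eq_mul, Real.coe_toNNReal _ (gaussianPDFReal_nonneg 0 1 z),
      pdf_mul_abs_eq, abs_of_nonneg (by positivity)]
  rw [integral_congr_ae (Filter.Eventually.of_forall heq), integral_const_mul,
    integral_comp_abs (f := fun x => x * Real.exp (-(1/2) * x ^ 2)), aux_Ioi,
    sqrt_two_div_pi_eq]
  ring


theorem Psi_star_eq_top_of_large_norm
    {Ω : Type*} [MeasurableSpace Ω] (P : Measure Ω) [IsProbabilityMeasure P]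
    {d : ℕ} (X : Ω → Euc d) (hXmeas : Measurable X)
    (r : ℝ) (hr : 0 < r) (hXbdd : ∀ᵐ ω ∂P, ‖X ω‖ ≤ r)
    (Λ : Euc d → ℝ) (hΛ : Λ = fun l => Real.log (∫ ω, Real.exp ⟪l, X ω⟫ ∂P))
    (Ψ : Euc d → ℝ) (hΨ : Ψ = fun l => ∫ z, Λ (z • l) ∂(gaussianReal 0 1))
    (Ψstar : Euc d → EReal)
    (hΨstar : Ψstar = fun v => ⨆ l : Euc d, ((⟪l, v⟫ - Ψ l : ℝ) : EReal))
    (v : Euc d) (hv : r * Real.sqrt (2 / Real.pi) < ‖v‖) :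
    Ψstar v = ⊤ := by
  have hsq : 0 < Real.sqrt (2 / Real.pi) := Real.sqrt_pos.2 (by positivity)
  have hv0 : 0 < ‖v‖ := lt_trans (by positivity) hv
  -- Λ l ≤ ‖l‖ * r
  have hΛle : ∀ l : Euc d, Λ l ≤ ‖l‖ * r := by
    intro l
    rw [hΛ]
    have hmeas : Measurable fun ω => Real.exp ⟪l, X ω⟫ :=
      Real.measurable_exp.comp
        (((continuous_const.inner continuous_id).measurable).comp hXmeas)
    have hbdd : ∀ᵐ ω ∂P, ‖Real.exp ⟪l, X ω⟫‖ ≤ Real.exp (‖l‖ * r) := by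
      filter_upwards [hXbdd] with ω hω
      rw [Real.norm_eq_abs, abs_of_pos (Real.exp_pos _), Real.exp_le_exp]
      calc ⟪l, X ω⟫ ≤ ‖l‖ * ‖X ω‖ := real_inner_le_norm _ _
        _ ≤ ‖l‖ * r := mul_le_mul_of_nonneg_left hω (norm_nonneg l)
    have hint : Integrable (fun ω => Real.exp ⟪l, X ω⟫) P :=
      Integrable.mono' (integrable_const (Real.exp (‖l‖ * r)))
        hmeas.aestronglyMeasurable hbdd
    have hpos : 0 < ∫ ω, Real.exp ⟪l, X ω⟫ ∂P := integral_exp_pos hint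
    rw [Real.log_le_iff_le_exp hpos]
    calc ∫ ω, Real.exp ⟪l, X ω⟫ ∂P ≤ ∫ _ω, Real.exp (‖l‖ * r) ∂P := by
          refine integral_mono_ae hint (integrable_const _) ?_
          filter_upwards [hbdd] with ω hω
          rwa [Real.norm_eq_abs, abs_of_pos (Real.exp_pos _)] at hω
      _ = Real.exp (‖l‖ * r) := by simp
  -- Ψ (t • v) ≤ t * ‖v‖ * r * √(2/π)
  have hΨle : ∀ t : ℝ, 0 ≤ t → Ψ (t • v) ≤ t * ‖v‖ * r * Real.sqrt (2 / Real.pi) := by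
    intro t ht
    simp only [hΨ]
    have hg : Integrable (fun z : ℝ => |z| * (t * ‖v‖ * r)) (gaussianReal 0 1) :=
      gauss_abs_integrable.mul_const _
    have hle : ∀ z : ℝ, Λ (z • t • v) ≤ |z| * (t * ‖v‖ * r) := by
      intro z
      calc Λ (z • t • v) ≤ ‖z • t • v‖ * r := hΛle _
        _ = |z| * (t * ‖v‖ * r) := by
          rw [norm_smul, norm_smul, Real.norm_eq_abs, Real.norm_eq_abs, abs_of_nonneg ht]
          ring
    by_cases hf : Integrable (fun z : ℝ => Λ (z • t • v)) (gaussianReal 0 1)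
    · calc ∫ z, Λ (z • t • v) ∂(gaussianReal 0 1)
          ≤ ∫ z, |z| * (t * ‖v‖ * r) ∂(gaussianReal 0 1) :=
            integral_mono_ae hf hg (Filter.Eventually.of_forall hle)
        _ = (∫ z, |z| ∂(gaussianReal 0 1)) * (t * ‖v‖ * r) := integral_mul_const _ _
        _ = t * ‖v‖ * r * Real.sqrt (2 / Real.pi) := by rw [gauss_abs_moment]; ring
    · rw [integral_undef hf]
      positivity
  -- conclude
  rw [hΨstar, iSup_eq_top]
  intro b hb
  obtain ⟨x, hxb, -⟩ := EReal.exists_between_coe_real hb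
  set ε := ‖v‖ - r * Real.sqrt (2 / Real.pi) with hε
  have hεpos : 0 < ε := sub_pos.2 hv
  set t := max ((x + 1) / (‖v‖ * ε)) 0 with htdef
  have ht0 : 0 ≤ t := le_max_right _ _
  refine ⟨t • v, lt_trans hxb ?_⟩
  rw [EReal.coe_lt_coe_iff]
  have hinner : ⟪t • v, v⟫ = t * ‖v‖ ^ 2 := by
    rw [real_inner_smul_left, real_inner_self_eq_norm_sq]
  have h1 : x + 1 ≤ t * (‖v‖ * ε) := by
    have hle : (x + 1) / (‖v‖ * ε) ≤ t := le_max_left _ _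
    have hpos : 0 < ‖v‖ * ε := by positivity
    calc x + 1 = (x + 1) / (‖v‖ * ε) * (‖v‖ * ε) := by field_simp
      _ ≤ t * (‖v‖ * ε) := mul_le_mul_of_nonneg_right hle hpos.le
  have h2 := hΨle t ht0
  have h3 : t * (‖v‖ * ε) = t * ‖v‖ ^ 2 - t * ‖v‖ * r * Real.sqrt (2 / Real.pi) := by
    rw [hε]; ring
  rw [hinner]
  clear_value t ε
  linarith [h1, h2, h3]

end
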